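/- arXiv:2601.14855 — 7 statements merged into one kernel-verified Lean document; each statement's English description precedes it below -/
import Mathlib

section
/- For any real x > 0 and step size 0 < Δt ≤ 1, the function h(x) = x·e^{Δt(1-x)} satisfies |h(x) - 1| ≤ |x - 1|, with equality if and only if x = 1. -/
/-!
Write `t = Δt (1 - x)`, so `h(x) = x e^t`. For `x < 1` we have `0 < t ≤ 1 - x`, hence
`x < x e^t` and, by `e^{-t} > 1 - t ≥ x`, also `x e^t < 1`. For `x > 1` we have `1 - x ≤ t < 0`,
hence `x e^t < x`, and `x e^t > 2 - x`: for `x < 2` because `x e^t > x (1 + t) ≥ x (2 - x) > 2 - x`,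
for `x ≥ 2` by positivity.
In both cases `h(x)` lies strictly closer to `1` than `x` does.
-/

open Real

lemma mul_exp_mem_Ioo_of_lt_one {x t : ℝ} (hx : 0 < x) (ht : 0 < t) (htx : t ≤ 1 - x) :
    x < x * exp t ∧ x * exp t < 1 := by
  have hx_lt_exp_neg : x < exp (-t) := by
    linarith [add_one_lt_exp (neg_ne_zero.mpr ht.ne')]
  constructor
  · exact lt_mul_of_one_lt_right hx (one_lt_exp_iff.mpr ht)
  · calc x * exp t < exp (-t) * exp t := mul_lt_mul_of_pos_right hx_lt_exp_neg (exp_pos t)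
      _ = 1 := by rw [← exp_add, neg_add_cancel, exp_zero]

lemma mul_exp_mem_Ioo_of_one_lt {x t : ℝ} (hx : 1 < x) (ht : t < 0) (htx : 1 - x ≤ t) :
    2 - x < x * exp t ∧ x * exp t < x := by
  have hx0 : 0 < x := by linarith
  constructor
  · rcases le_or_gt 2 x with hx2 | hx2
    · linarith [mul_pos hx0 (exp_pos t)]
    · calc 2 - x < x * (2 - x) := by nlinarith
        _ ≤ x * (t + 1) := by gcongr; linarith
        _ < x * exp t := mul_lt_mul_of_pos_left (add_one_lt_exp ht.ne) hx0
  · exact mul_lt_of_lt_one_right hx0 (exp_lt_one_iff.mpr ht)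

lemma abs_mul_exp_sub_one_lt {Δt x : ℝ} (hΔt0 : 0 < Δt) (hΔt1 : Δt ≤ 1) (hx : 0 < x)
    (hx1 : x ≠ 1) : |x * exp (Δt * (1 - x)) - 1| < |x - 1| := by
  rcases hx1.lt_or_gt with hlt | hgt
  · obtain ⟨hlow, hup⟩ := mul_exp_mem_Ioo_of_lt_one hx (mul_pos hΔt0 (sub_pos.mpr hlt))
      (mul_le_of_le_one_left (sub_pos.mpr hlt).le hΔt1)
    rw [abs_of_neg (sub_neg.mpr hup), abs_of_neg (sub_neg.mpr hlt)]
    linarith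
  · obtain ⟨hlow, hup⟩ := mul_exp_mem_Ioo_of_one_lt hgt
      (mul_neg_of_pos_of_neg hΔt0 (sub_neg.mpr hgt)) (by nlinarith)
    rw [abs_of_pos (sub_pos.mpr hgt), abs_lt]
    constructor <;> linarith

/-- For `0 < Δt ≤ 1` and `x > 0`, the map `h(x) = x·e^{Δt(1-x)}` satisfies
`|h(x) - 1| ≤ |x - 1|`, with equality iff `x = 1`. -/
theorem stmt_0 (Δt x : ℝ) (hΔt0 : 0 < Δt) (hΔt1 : Δt ≤ 1) (hx : 0 < x) :
    |x * Real.exp (Δt * (1 - x)) - 1| ≤ |x - 1| ∧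
    (|x * Real.exp (Δt * (1 - x)) - 1| = |x - 1| ↔ x = 1) := by
  rcases eq_or_ne x 1 with rfl | hx1
  · simp
  · have hlt := abs_mul_exp_sub_one_lt hΔt0 hΔt1 hx hx1
    exact ⟨hlt.le, iff_of_false hlt.ne hx1⟩
end

section
/- For 0 < Δt ≤ 1 and x > 1, the value h(x) = x·e^{Δt(1-x)} satisfies h(x) < x and |h(x) - 1| < x - 1. -/
open Real

lemma mul_exp_lt_self {x a : ℝ} (hx : 0 < x) (ha : a < 0) : x * exp a < x :=
  mul_lt_of_lt_one_right hx (exp_lt_one_iff.mpr ha)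

lemma two_sub_lt_mul_exp_mul_one_sub {t x : ℝ} (ht : t ≤ 1) (hx : 1 < x) :
    2 - x < x * exp (t * (1 - x)) :=
  calc 2 - x < exp (1 - x) := by linarith [add_one_lt_exp (x := 1 - x) (by linarith)]
    _ ≤ exp (t * (1 - x)) := exp_le_exp.mpr (by nlinarith)
    _ ≤ x * exp (t * (1 - x)) := le_mul_of_one_le_left (exp_pos _).le hx.le

/-- For `0 < Δt ≤ 1` and `x > 1`, the value `h(x) = x·e^{Δt(1-x)}` satisfies
`h(x) < x` and `|h(x) - 1| < x - 1`. -/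
theorem stmt_4 (Δt x : ℝ) (hΔt0 : 0 < Δt) (hΔt1 : Δt ≤ 1) (hx : 1 < x) :
    x * Real.exp (Δt * (1 - x)) < x ∧
    |x * Real.exp (Δt * (1 - x)) - 1| < x - 1 := by
  have hlt : x * exp (Δt * (1 - x)) < x :=
    mul_exp_lt_self (by linarith) (mul_neg_of_pos_of_neg hΔt0 (by linarith))
  have hgt := two_sub_lt_mul_exp_mul_one_sub hΔt1 hx
  exact ⟨hlt, abs_lt.mpr ⟨by linarith, by linarith⟩⟩
end

section
/- Let X be symmetric positive definite with square root X = X^{1/2}(X^{1/2})ᵀ and another factorization X = L·Lᵀ with L invertible, and let σ be a symmetric matrix. Then X^{1/2}·exp(X^{-1/2}·σ·X^{-T/2})·X^{T/2} = L·exp(L⁻¹·σ·L^{-T})·Lᵀ. -/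
/-!
If `R Rᵀ = L Lᵀ` with `L` invertible, then `Q = L⁻¹ R` is orthogonal and `R = L Q`. Replacing `L`
by `L Q` conjugates the argument of `exp` by `Q⁻¹ = Qᵀ`, the exponential commutes with this
conjugation, and the outer factors `Q Qᵀ` cancel.
-/

open Matrix

namespace Matrix

variable {m 𝔸 : Type*} [Fintype m] [DecidableEq m]

theorem inv_mul_mul_transpose_eq_one [CommRing 𝔸] {R L : Matrix m m 𝔸} (hL : IsUnit L.det)
    (h : R * Rᵀ = L * Lᵀ) : L⁻¹ * R * (L⁻¹ * R)ᵀ = 1 := by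
  have hLT : IsUnit Lᵀ.det := by rwa [det_transpose]
  calc L⁻¹ * R * (L⁻¹ * R)ᵀ = L⁻¹ * (R * Rᵀ) * (Lᵀ)⁻¹ := by
        rw [transpose_mul, transpose_nonsing_inv]; noncomm_ring
    _ = 1 := by
        rw [h, ← Matrix.mul_assoc, nonsing_inv_mul _ hL, Matrix.one_mul, mul_nonsing_inv _ hLT]

theorem mul_exp_inv_mul_mul_transpose_inv_mul_transpose_of_orthogonal
    [NormedCommRing 𝔸] [NormedAlgebra ℚ 𝔸] [CompleteSpace 𝔸]
    (L Q σ : Matrix m m 𝔸) (hQ : Q * Qᵀ = 1) :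
    L * Q * NormedSpace.exp ((L * Q)⁻¹ * σ * ((L * Q)ᵀ)⁻¹) * (L * Q)ᵀ
      = L * NormedSpace.exp (L⁻¹ * σ * (Lᵀ)⁻¹) * Lᵀ := by
  have hQ' : Qᵀ * Q = 1 := mul_eq_one_comm.mp hQ
  have hQinv : Q⁻¹ = Qᵀ := inv_eq_right_inv hQ
  have hQTinv : (Qᵀ)⁻¹ = Q := inv_eq_right_inv hQ'
  have hQunit : IsUnit Q := (isUnit_iff_isUnit_det Q).mpr (isUnit_det_of_right_inverse hQ)
  have hconj : (L * Q)⁻¹ * σ * ((L * Q)ᵀ)⁻¹ = Q⁻¹ * (L⁻¹ * σ * (Lᵀ)⁻¹) * Q := by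
    rw [transpose_mul, mul_inv_rev, mul_inv_rev, hQTinv]; noncomm_ring
  rw [hconj, exp_conj' _ _ hQunit, hQinv, transpose_mul]
  calc L * Q * (Qᵀ * NormedSpace.exp (L⁻¹ * σ * (Lᵀ)⁻¹) * Q) * (Qᵀ * Lᵀ)
      = L * (Q * Qᵀ) * NormedSpace.exp (L⁻¹ * σ * (Lᵀ)⁻¹) * (Q * Qᵀ) * Lᵀ := by noncomm_ring
    _ = L * NormedSpace.exp (L⁻¹ * σ * (Lᵀ)⁻¹) * Lᵀ := by
        rw [hQ, Matrix.mul_one, Matrix.mul_one]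

end Matrix

theorem stmt_8_general {n : ℕ} (X R L σ : Matrix (Fin n) (Fin n) ℝ)
    (hXR : X = R * Rᵀ) (hXL : X = L * Lᵀ)
    (hL : IsUnit L.det) :
    R * NormedSpace.exp (R⁻¹ * σ * (Rᵀ)⁻¹) * Rᵀ
      = L * NormedSpace.exp (L⁻¹ * σ * (Lᵀ)⁻¹) * Lᵀ := by
  rw [← mul_nonsing_inv_cancel_left (A := L) R hL]
  exact mul_exp_inv_mul_mul_transpose_inv_mul_transpose_of_orthogonal L _ σ
    (inv_mul_mul_transpose_eq_one hL (hXR.symm.trans hXL))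

/-- The exponential map of the affine-invariant metric on the SPD manifold is independent of
the chosen square-root factorization: if `X = R·Rᵀ = L·Lᵀ` with `R, L` invertible and `σ` is
symmetric, then `R·exp(R⁻¹ σ R⁻ᵀ)·Rᵀ = L·exp(L⁻¹ σ L⁻ᵀ)·Lᵀ`. -/
theorem stmt_8 {n : ℕ} (X R L σ : Matrix (Fin n) (Fin n) ℝ)
    (hX : X.PosDef) (hXR : X = R * Rᵀ) (hXL : X = L * Lᵀ)
    (hR : IsUnit R.det) (hL : IsUnit L.det) (hσ : σ.IsSymm) :
    R * NormedSpace.exp (R⁻¹ * σ * (Rᵀ)⁻¹) * Rᵀ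
      = L * NormedSpace.exp (L⁻¹ * σ * (Lᵀ)⁻¹) * Lᵀ :=
  stmt_8_general X R L σ hXR hXL hL
end

section
/- Let X and Y be symmetric positive definite matrices, X = X^{1/2}(X^{1/2})ᵀ and X = L·Lᵀ two square-root factorizations with L invertible. Then ‖log(X^{-1/2}·Y·X^{-T/2})‖_F = ‖log(L⁻¹·Y·L^{-T})‖_F, where log is the matrix logarithm (both arguments are similar to SPD matrices so the logarithm is defined) and ‖·‖_F is the Frobenius norm. -/
open Matrix

/-- Matrix logarithm, defined via the continuous functional calculus (for self-adjoint
matrices; junk value otherwise). -/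
noncomputable def matLog {n : ℕ} (A : Matrix (Fin n) (Fin n) ℝ) : Matrix (Fin n) (Fin n) ℝ :=
  cfc Real.log A

/-- Frobenius norm of a real matrix. -/
noncomputable def frobNorm {n : ℕ} (A : Matrix (Fin n) (Fin n) ℝ) : ℝ :=
  Real.sqrt (∑ i, ∑ j, (A i j) ^ 2)

/-!
Both `R` and `L` are square roots of the same `X`, so `Q := L⁻¹ R` is orthogonal, and
`L⁻¹ Y L⁻ᵀ = Q (R⁻¹ Y R⁻ᵀ) Qᵀ`. The real functional calculus on matrices commutes with
orthogonal conjugation (a star-algebra automorphism; every function is continuous on the finite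
spectrum), and the Frobenius norm `√(tr (Mᵀ M))` is invariant under it.
-/

namespace Matrix

theorem cfc_unitary_conj {𝕜 : Type*} [RCLike 𝕜] {ι : Type*} [Fintype ι] [DecidableEq ι]
    (f : ℝ → ℝ) (A : Matrix ι ι 𝕜) (U : unitary (Matrix ι ι 𝕜)) :
    cfc f ((U : Matrix ι ι 𝕜) * A * star (U : Matrix ι ι 𝕜)) =
      U * cfc f A * star (U : Matrix ι ι 𝕜) := by
  by_cases hA : IsSelfAdjoint A
  · have hφ : Continuous (Unitary.conjStarAlgAut ℝ (Matrix ι ι 𝕜) U) :=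
      (continuous_const.mul continuous_id).mul continuous_const
    exact (StarAlgHomClass.map_cfc (Unitary.conjStarAlgAut ℝ _ U) f A
      (A.finite_real_spectrum.continuousOn f) hφ hA (hA.conjugate _)).symm
  -- otherwise both sides are `cfc`'s junk value `0`
  · have hUA : ¬ IsSelfAdjoint ((U : Matrix ι ι 𝕜) * A * star (U : Matrix ι ι 𝕜)) := by
      refine fun h ↦ hA ?_
      simpa [← mul_assoc, mul_assoc A] using h.conjugate' (U : Matrix ι ι 𝕜)
    rw [cfc_apply_of_not_predicate _ hA, cfc_apply_of_not_predicate _ hUA, mul_zero, zero_mul]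

end Matrix

theorem frobNorm_eq_sqrt_trace {n : ℕ} (A : Matrix (Fin n) (Fin n) ℝ) :
    frobNorm A = √(Aᵀ * A).trace := by
  simp only [frobNorm, trace, diag, mul_apply, transpose_apply, sq]
  rw [Finset.sum_comm]

theorem frobNorm_orthogonal_conj {n : ℕ} {Q : Matrix (Fin n) (Fin n) ℝ}
    (hQ : Q ∈ orthogonalGroup (Fin n) ℝ) (M : Matrix (Fin n) (Fin n) ℝ) :
    frobNorm (Q * M * Qᵀ) = frobNorm M := by
  have hQQ : Qᵀ * Q = 1 := (mem_orthogonalGroup_iff' _ _).mp hQ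
  have hsq : (Q * M * Qᵀ)ᵀ * (Q * M * Qᵀ) = Q * (Mᵀ * M) * Qᵀ := by
    simp only [transpose_mul, transpose_transpose, Matrix.mul_assoc]
    rw [← Matrix.mul_assoc Qᵀ Q, hQQ, Matrix.one_mul]
  rw [frobNorm_eq_sqrt_trace, frobNorm_eq_sqrt_trace, hsq, trace_mul_cycle,
    ← Matrix.mul_assoc, hQQ, Matrix.one_mul]

theorem matLog_orthogonal_conj {n : ℕ} {Q : Matrix (Fin n) (Fin n) ℝ}
    (hQ : Q ∈ orthogonalGroup (Fin n) ℝ) (A : Matrix (Fin n) (Fin n) ℝ) :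
    matLog (Q * A * Qᵀ) = Q * matLog A * Qᵀ :=
  cfc_unitary_conj Real.log A ⟨Q, hQ⟩

theorem inv_mul_mem_orthogonalGroup {n : ℕ} {R L : Matrix (Fin n) (Fin n) ℝ}
    (h : R * Rᵀ = L * Lᵀ) (hL : IsUnit L.det) : L⁻¹ * R ∈ orthogonalGroup (Fin n) ℝ := by
  rw [mem_orthogonalGroup_iff, transpose_mul, transpose_nonsing_inv]
  calc L⁻¹ * R * (Rᵀ * Lᵀ⁻¹) = L⁻¹ * (R * Rᵀ) * Lᵀ⁻¹ := by simp only [Matrix.mul_assoc]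
    _ = 1 := by
      rw [h, ← Matrix.mul_assoc, nonsing_inv_mul L hL, Matrix.one_mul,
        mul_nonsing_inv _ (isUnit_det_transpose L hL)]

theorem conj_inv_mul_conj_inv {n : ℕ} {R : Matrix (Fin n) (Fin n) ℝ} (hR : IsUnit R.det)
    (L Y : Matrix (Fin n) (Fin n) ℝ) :
    L⁻¹ * R * (R⁻¹ * Y * Rᵀ⁻¹) * (L⁻¹ * R)ᵀ = L⁻¹ * Y * Lᵀ⁻¹ := by
  rw [transpose_mul, transpose_nonsing_inv]
  calc L⁻¹ * R * (R⁻¹ * Y * Rᵀ⁻¹) * (Rᵀ * Lᵀ⁻¹)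
      = L⁻¹ * (R * R⁻¹) * Y * (Rᵀ⁻¹ * Rᵀ) * Lᵀ⁻¹ := by simp only [Matrix.mul_assoc]
    _ = L⁻¹ * Y * Lᵀ⁻¹ := by
      rw [mul_nonsing_inv R hR, nonsing_inv_mul _ (isUnit_det_transpose R hR),
        Matrix.mul_one, Matrix.mul_one]

theorem stmt_9_general {n : ℕ} (X Y R L : Matrix (Fin n) (Fin n) ℝ)
    (hXR : X = R * Rᵀ) (hXL : X = L * Lᵀ)
    (hR : IsUnit R.det) (hL : IsUnit L.det) :
    frobNorm (matLog (R⁻¹ * Y * (Rᵀ)⁻¹)) = frobNorm (matLog (L⁻¹ * Y * (Lᵀ)⁻¹)) := by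
  have hQ := inv_mul_mem_orthogonalGroup (hXR.symm.trans hXL) hL
  rw [← conj_inv_mul_conj_inv hR L Y, matLog_orthogonal_conj hQ, frobNorm_orthogonal_conj hQ]

/-- The affine-invariant Riemannian distance `‖log(X^{-1/2} Y X^{-T/2})‖_F` on the SPD
manifold does not depend on the chosen square root of `X`: if `X = R·Rᵀ = L·Lᵀ` with `R, L`
invertible and `Y` is SPD, then `‖log(R⁻¹ Y R⁻ᵀ)‖_F = ‖log(L⁻¹ Y L⁻ᵀ)‖_F`. -/
theorem stmt_9 {n : ℕ} (X Y R L : Matrix (Fin n) (Fin n) ℝ)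
    (hX : X.PosDef) (hY : Y.PosDef) (hXR : X = R * Rᵀ) (hXL : X = L * Lᵀ)
    (hR : IsUnit R.det) (hL : IsUnit L.det) :
    frobNorm (matLog (R⁻¹ * Y * (Rᵀ)⁻¹)) = frobNorm (matLog (L⁻¹ * Y * (Lᵀ)⁻¹)) :=
  stmt_9_general X Y R L hXR hXL hR hL
end

section
/- Fix 0 < Δt_min ≤ 1 and δ = 1/3. For Δt ∈ [Δt_min, 1] and ξ ∈ (1-δ, 1), the contraction factor satisfies e^{Δt(1-ξ)}·(1 - Δt·ξ) ≤ 1 - δ·Δt_min. -/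
/-! Put `a = Δt(1-ξ) ∈ (0, 1/3)`. From `e^a (1 - a) ≤ 1` the factor is at most
`(1 - Δt ξ)/(1 - a)`, and clearing the denominator leaves a polynomial inequality that holds
because `ξ > 2/3`; finally `Δt ≥ Δt_min`. -/

open Real

lemma exp_mul_one_sub_le_one (a : ℝ) : exp a * (1 - a) ≤ 1 :=
  calc exp a * (1 - a) ≤ exp a * exp (-a) := by
        gcongr
        linarith [add_one_le_exp (-a)]
    _ = 1 := by rw [← exp_add, add_neg_cancel, exp_zero]

lemma exp_mul_one_sub_mul_le {t x : ℝ} (ht : 0 < t) (ht1 : t ≤ 1) (hx : 2 / 3 < x)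
    (hx1 : x < 1) : exp (t * (1 - x)) * (1 - t * x) ≤ 1 - 1 / 3 * t := by
  have hpos : 0 < 1 - t * (1 - x) := by nlinarith
  have hnum : 0 ≤ 1 - t * x := by nlinarith
  have hexp : exp (t * (1 - x)) ≤ 1 / (1 - t * (1 - x)) := by
    rw [le_div_iff₀ hpos]
    exact exp_mul_one_sub_le_one _
  calc exp (t * (1 - x)) * (1 - t * x) ≤ 1 / (1 - t * (1 - x)) * (1 - t * x) := by gcongr
    _ ≤ 1 - 1 / 3 * t := by
        rw [one_div_mul_eq_div, div_le_iff₀ hpos]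
        nlinarith [mul_pos ht (mul_pos ht (sub_pos.2 hx1))]

theorem stmt_13_general (Δtmin Δt ξ : ℝ) (h0 : 0 < Δtmin)
    (hΔl : Δtmin ≤ Δt) (hΔu : Δt ≤ 1)
    (hξl : 1 - 1 / 3 < ξ) (hξu : ξ < 1) :
    Real.exp (Δt * (1 - ξ)) * (1 - Δt * ξ) ≤ 1 - (1 / 3) * Δtmin := by
  have hξ : 2 / 3 < ξ := by linarith
  calc Real.exp (Δt * (1 - ξ)) * (1 - Δt * ξ) ≤ 1 - 1 / 3 * Δt :=
        exp_mul_one_sub_mul_le (h0.trans_le hΔl) hΔu hξ hξu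
    _ ≤ 1 - 1 / 3 * Δtmin := by linarith

/-- Convergence-phase contraction estimate: for `δ = 1/3`, `Δt ∈ [Δt_min, 1]` with
`0 < Δt_min ≤ 1`, and `ξ ∈ (1 - δ, 1)`, one has
`e^{Δt(1-ξ)}·(1 - Δt·ξ) ≤ 1 - δ·Δt_min`. -/
theorem stmt_13 (Δtmin Δt ξ : ℝ) (h0 : 0 < Δtmin) (h1 : Δtmin ≤ 1)
    (hΔl : Δtmin ≤ Δt) (hΔu : Δt ≤ 1)
    (hξl : 1 - 1 / 3 < ξ) (hξu : ξ < 1) :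
    Real.exp (Δt * (1 - ξ)) * (1 - Δt * ξ) ≤ 1 - (1 / 3) * Δtmin :=
  stmt_13_general Δtmin Δt ξ h0 hΔl hΔu hξl hξu
end

section
/- Let Σ be symmetric positive definite, Σ = L·Lᵀ with L invertible, and let Ω be symmetric with ‖Δt(-LᵀL + I + Ω)‖₂ ≤ 1. Then tr(L·(exp(Δt(-LᵀL+I+Ω)) - I)·Lᵀ) ≤ Δt·tr(LᵀL·(-LᵀL+I+Ω)) + Δt²·tr(LᵀL·(-LᵀL+I+Ω)²). -/
/-!
The scalar bound `e^x - 1 ≤ x + x²` on `[-1, 1]` lifts through the continuous functional calculus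
to the Loewner-order inequality `exp A - 1 ≤ A + A²` for the self-adjoint matrix
`A = Δt (-LᵀL + 1 + Ω)`, whose spectrum lies in `[-1, 1]` because `‖A‖₂ ≤ 1`. Conjugation by `L`
preserves the Loewner order and the trace is monotone for it; cyclicity of the trace then turns
`tr (L X Lᵀ)` into `tr (LᵀL X)`.
-/

open Matrix

noncomputable def specNorm {n : ℕ} (A : Matrix (Fin n) (Fin n) ℝ) : ℝ :=
  ‖Matrix.toEuclideanCLM (𝕜 := ℝ) A‖

lemma Real.exp_sub_one_le_add_sq {x : ℝ} (hx : |x| ≤ 1) : Real.exp x - 1 ≤ x + x ^ 2 := by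
  linarith [(abs_le.mp (Real.abs_exp_sub_one_sub_id_le hx)).2]

section CStarRing

variable {A : Type*} [NormedRing A] [StarRing A] [CStarRing A] [NormedAlgebra ℝ A]
  [CompleteSpace A]

lemma abs_le_norm_of_mem_spectrum {a : A} {x : ℝ} (hx : x ∈ spectrum ℝ a) : |x| ≤ ‖a‖ := by
  rcases subsingleton_or_nontrivial A with _ | _
  · simp [spectrum.of_subsingleton] at hx
  · exact spectrum.norm_le_norm_of_mem hx

variable [PartialOrder A] [StarOrderedRing A] [ContinuousFunctionalCalculus ℝ A IsSelfAdjoint]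

lemma IsSelfAdjoint.exp_sub_one_le_add_sq {a : A} (ha : IsSelfAdjoint a) (h : ‖a‖ ≤ 1) :
    NormedSpace.exp a - 1 ≤ a + a ^ 2 :=
  calc NormedSpace.exp a - 1 = cfc (fun x => Real.exp x - 1) a := by
        rw [cfc_sub .., cfc_const_one ℝ a, CFC.real_exp_eq_normedSpace_exp]
    _ ≤ cfc (fun x => x + x ^ 2) a :=
        cfc_mono fun x hx => Real.exp_sub_one_le_add_sq ((abs_le_norm_of_mem_spectrum hx).trans h)
    _ = a + a ^ 2 := by rw [cfc_add .., cfc_id' .., cfc_pow_id ..]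

end CStarRing

open scoped ComplexOrder MatrixOrder in
lemma Matrix.trace_mul_mul_conjTranspose_mono {𝕜 m n : Type*} [RCLike 𝕜] [Fintype m] [Fintype n]
    {X Y : Matrix n n 𝕜} (h : X ≤ Y) (B : Matrix m n 𝕜) :
    (B * X * Bᴴ).trace ≤ (B * Y * Bᴴ).trace := by
  rw [← sub_nonneg, ← trace_sub, ← Matrix.sub_mul, ← Matrix.mul_sub]
  exact ((le_iff.mp h).mul_mul_conjTranspose_same B).trace_nonneg

open scoped MatrixOrder Matrix.Norms.L2Operator in
theorem stmt_14_general {n : ℕ} (L Ω : Matrix (Fin n) (Fin n) ℝ) (Δt : ℝ)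
    (hΩ : Ω.IsSymm)
    (hnorm : specNorm (Δt • (-(Lᵀ * L) + 1 + Ω)) ≤ 1) :
    (L * (NormedSpace.exp (Δt • (-(Lᵀ * L) + 1 + Ω)) - 1) * Lᵀ).trace
      ≤ Δt * ((Lᵀ * L) * (-(Lᵀ * L) + 1 + Ω)).trace
        + Δt ^ 2 * ((Lᵀ * L) * ((-(Lᵀ * L) + 1 + Ω) * (-(Lᵀ * L) + 1 + Ω))).trace := by
  set M := -(Lᵀ * L) + 1 + Ω
  have hM : M.IsHermitian :=
    isHermitian_iff_isSymm.mpr (((isSymm_transpose_mul_self L).neg.add isSymm_one).add hΩ)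
  have hexp : NormedSpace.exp (Δt • M) - 1 ≤ Δt • M + (Δt • M) ^ 2 :=
    ((IsSelfAdjoint.all Δt).smul hM.isSelfAdjoint).exp_sub_one_le_add_sq
      (show ‖Δt • M‖ ≤ 1 from hnorm)
  calc (L * (NormedSpace.exp (Δt • M) - 1) * Lᵀ).trace
      ≤ (L * (Δt • M + (Δt • M) ^ 2) * Lᵀ).trace := by
        simpa only [conjTranspose_eq_transpose_of_trivial] using
          trace_mul_mul_conjTranspose_mono hexp L
    _ = Δt * (Lᵀ * L * M).trace + Δt ^ 2 * (Lᵀ * L * (M * M)).trace := by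
        rw [trace_mul_cycle, smul_pow, Matrix.mul_add, trace_add, Matrix.mul_smul,
          Matrix.mul_smul, trace_smul, trace_smul, sq, sq, smul_eq_mul, smul_eq_mul]

/-- If `Σ = L·Lᵀ` is SPD, `Ω` is symmetric and `‖Δt(-LᵀL + I + Ω)‖₂ ≤ 1`, then
`tr(L(exp(Δt(-LᵀL+I+Ω)) - I)Lᵀ) ≤ Δt·tr(LᵀL(-LᵀL+I+Ω)) + Δt²·tr(LᵀL(-LᵀL+I+Ω)²)`. -/
theorem stmt_14 {n : ℕ} (L Ω : Matrix (Fin n) (Fin n) ℝ) (Δt : ℝ)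
    (hS : (L * Lᵀ).PosDef) (hL : IsUnit L.det) (hΩ : Ω.IsSymm)
    (hnorm : specNorm (Δt • (-(Lᵀ * L) + 1 + Ω)) ≤ 1) :
    (L * (NormedSpace.exp (Δt • (-(Lᵀ * L) + 1 + Ω)) - 1) * Lᵀ).trace
      ≤ Δt * ((Lᵀ * L) * (-(Lᵀ * L) + 1 + Ω)).trace
        + Δt ^ 2 * ((Lᵀ * L) * ((-(Lᵀ * L) + 1 + Ω) * (-(Lᵀ * L) + 1 + Ω))).trace :=
  stmt_14_general L Ω Δt hΩ hnorm
end

section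
/- Let X_n be symmetric positive definite, G a symmetric matrix (the Euclidean gradient of a smooth function f at X_n), and Δt > 0. Then the minimizer over SPD matrices X of ⟨G, X - X_n⟩ + (1/Δt)·D_φ(X, X_n), where D_φ is the Bregman divergence of φ(X) = tr(S log S - S) with S = X_n^{-1/2}·X·X_n^{-T/2}, is X_{n+1} = X_n^{1/2}·exp(-Δt·X_n^{T/2}·G·X_n^{1/2})·X_n^{T/2}. -/
open Matrix

lemma scalar_klein {a b : ℝ} (ha : 0 < a) (hb : 0 < b) :
    0 ≤ a * Real.log a - a * Real.log b - a + b := by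
  have h := Real.log_le_sub_one_of_pos (x := b / a) (by positivity)
  have h2 : a * Real.log (b / a) ≤ a * (b / a - 1) := by nlinarith
  rw [Real.log_div hb.ne' ha.ne'] at h2
  have : a * (b / a - 1) = b - a := by field_simp
  nlinarith

lemma scalar_klein_strict {a b : ℝ} (ha : 0 < a) (hb : 0 < b) (hab : a ≠ b) :
    0 < a * Real.log a - a * Real.log b - a + b := by
  have h := Real.log_lt_sub_one_of_pos (x := b / a) (by positivity)
    (by intro hh; apply hab; field_simp at hh; linarith)
  have h2 : a * Real.log (b / a) < a * (b / a - 1) := by nlinarith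
  rw [Real.log_div hb.ne' ha.ne'] at h2
  have : a * (b / a - 1) = b - a := by field_simp
  nlinarith

lemma trace_diag_conj {n : ℕ} (W : Matrix (Fin n) (Fin n) ℝ) (d e : Fin n → ℝ) :
    (diagonal d * W * (diagonal e * Wᵀ)).trace = ∑ i, ∑ j, d i * e j * (W i j)^2 := by
  simp only [Matrix.trace, Matrix.diag, mul_apply, diagonal_apply, transpose_apply,
    Finset.sum_mul, Finset.mul_sum, sq, mul_ite, mul_zero, ite_mul, zero_mul,
    Finset.sum_ite_eq, Finset.sum_ite_eq', Finset.mem_univ, if_true]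
  exact Finset.sum_congr rfl fun i _ => Finset.sum_congr rfl fun j _ => by ring

lemma trace_conj_pair {n : ℕ} (U V : Matrix (Fin n) (Fin n) ℝ) (d e : Fin n → ℝ) :
    ((U * diagonal d * Uᵀ) * (V * diagonal e * Vᵀ)).trace
      = ∑ i, ∑ j, d i * e j * ((Uᵀ * V) i j)^2 := by
  have h1 : (U * diagonal d * Uᵀ) * (V * diagonal e * Vᵀ)
      = U * (diagonal d * (Uᵀ * (V * (diagonal e * Vᵀ)))) := by
    simp only [Matrix.mul_assoc]
  rw [h1, trace_mul_comm]
  have h2 : diagonal d * (Uᵀ * (V * (diagonal e * Vᵀ))) * U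
      = diagonal d * (Uᵀ * V) * (diagonal e * (Uᵀ * V)ᵀ) := by
    simp only [transpose_mul, transpose_transpose, Matrix.mul_assoc]
  rw [h2, trace_diag_conj]

lemma spectral_decomp {n : ℕ} {S : Matrix (Fin n) (Fin n) ℝ} (hH : S.IsHermitian) :
    S = (hH.eigenvectorUnitary : Matrix (Fin n) (Fin n) ℝ) * diagonal hH.eigenvalues
        * (hH.eigenvectorUnitary : Matrix (Fin n) (Fin n) ℝ)ᵀ := by
  conv_lhs => rw [hH.spectral_theorem]
  rw [← conjTranspose_eq_transpose_of_trivial, ← star_eq_conjTranspose]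
  simp [Function.comp]

lemma matLog_decomp {n : ℕ} {S : Matrix (Fin n) (Fin n) ℝ} (hH : S.IsHermitian) :
    matLog S = (hH.eigenvectorUnitary : Matrix (Fin n) (Fin n) ℝ)
        * diagonal (Real.log ∘ hH.eigenvalues)
        * (hH.eigenvectorUnitary : Matrix (Fin n) (Fin n) ℝ)ᵀ := by
  rw [matLog, hH.cfc_eq, Matrix.IsHermitian.cfc]
  rw [← conjTranspose_eq_transpose_of_trivial, ← star_eq_conjTranspose]
  simp [Function.comp]

lemma unit_mul {n : ℕ} {S : Matrix (Fin n) (Fin n) ℝ} (hH : S.IsHermitian) :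
    (hH.eigenvectorUnitary : Matrix (Fin n) (Fin n) ℝ) *
      (hH.eigenvectorUnitary : Matrix (Fin n) (Fin n) ℝ)ᵀ = 1 ∧
    (hH.eigenvectorUnitary : Matrix (Fin n) (Fin n) ℝ)ᵀ *
      (hH.eigenvectorUnitary : Matrix (Fin n) (Fin n) ℝ) = 1 := by
  constructor
  · rw [← conjTranspose_eq_transpose_of_trivial, ← star_eq_conjTranspose]
    exact Unitary.mul_star_self_of_mem (SetLike.coe_mem _)
  · rw [← conjTranspose_eq_transpose_of_trivial, ← star_eq_conjTranspose]
    exact Unitary.star_mul_self_of_mem (SetLike.coe_mem _)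


lemma eigen_package {n : ℕ} {S : Matrix (Fin n) (Fin n) ℝ} (hS : S.PosDef) :
    ∃ (U : Matrix (Fin n) (Fin n) ℝ) (d : Fin n → ℝ),
      (∀ i, 0 < d i) ∧ U * Uᵀ = 1 ∧ Uᵀ * U = 1 ∧ S = U * diagonal d * Uᵀ ∧
        matLog S = U * diagonal (Real.log ∘ d) * Uᵀ :=
  ⟨_, _, hS.eigenvalues_pos, (unit_mul hS.1).1, (unit_mul hS.1).2,
    spectral_decomp hS.1, matLog_decomp hS.1⟩

lemma klein {n : ℕ} {S T : Matrix (Fin n) (Fin n) ℝ} (hS : S.PosDef) (hT : T.PosDef) :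
    0 ≤ (S * matLog S).trace - (S * matLog T).trace - S.trace + T.trace ∧
    ((S * matLog S).trace - (S * matLog T).trace - S.trace + T.trace = 0 → S = T) := by
  obtain ⟨U, d, dpos, hU1, hU2, hSd, hlogS⟩ := eigen_package hS
  obtain ⟨V, e, epos, hV1, hV2, hTd, hlogT⟩ := eigen_package hT
  set W := Uᵀ * V with hWdef
  have hWWt : W * Wᵀ = 1 := by
    rw [hWdef, transpose_mul, transpose_transpose]
    calc Uᵀ * V * (Vᵀ * U) = Uᵀ * (V * Vᵀ) * U := by simp only [Matrix.mul_assoc]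
    _ = 1 := by rw [hV1, mul_one, hU2]
  have hWtW : Wᵀ * W = 1 := by
    rw [hWdef, transpose_mul, transpose_transpose]
    calc Vᵀ * U * (Uᵀ * V) = Vᵀ * (U * Uᵀ) * V := by simp only [Matrix.mul_assoc]
    _ = 1 := by rw [hU1, mul_one, hV2]
  have hrow : ∀ i, ∑ j, (W i j)^2 = 1 := by
    intro i
    have := congrFun (congrFun hWWt i) i
    simpa [mul_apply, one_apply, sq] using this
  have hcol : ∀ j, ∑ i, (W i j)^2 = 1 := by
    intro j
    have := congrFun (congrFun hWtW j) j
    simpa [mul_apply, one_apply, sq, mul_comm] using this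
  have A1 : (S * matLog S).trace = ∑ i, d i * Real.log (d i) := by
    rw [hlogS]; rw [hSd]
    rw [trace_conj_pair, hU2]
    simp [one_apply, sq, Finset.sum_ite_eq', apply_ite]
  have A2 : (S * matLog T).trace = ∑ i, ∑ j, d i * Real.log (e j) * (W i j)^2 := by
    rw [hlogT]; rw [hSd]
    rw [trace_conj_pair]
    simp [Function.comp]
    rfl
  have A3 : S.trace = ∑ i, d i := by
    rw [hSd, trace_mul_cycle, hU2, one_mul, trace_diagonal]
  have A4 : T.trace = ∑ i, e i := by
    rw [hTd, trace_mul_cycle, hV2, one_mul, trace_diagonal]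
  have key : (S * matLog S).trace - (S * matLog T).trace - S.trace + T.trace
      = ∑ i, ∑ j, (W i j)^2
          * (d i * Real.log (d i) - d i * Real.log (e j) - d i + e j) := by
    rw [A1, A2, A3, A4]
    have E1 : ∀ (f : Fin n → ℝ), ∑ i, ∑ j, (W i j)^2 * f i = ∑ i, f i := by
      intro f
      refine Finset.sum_congr rfl fun i _ => ?_
      rw [← Finset.sum_mul, hrow i, one_mul]
    have E2 : ∀ (f : Fin n → ℝ), ∑ i, ∑ j, (W i j)^2 * f j = ∑ j, f j := by
      intro f
      rw [Finset.sum_comm]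
      refine Finset.sum_congr rfl fun j _ => ?_
      rw [← Finset.sum_mul, hcol j, one_mul]
    have expand : ∑ i, ∑ j, (W i j)^2
          * (d i * Real.log (d i) - d i * Real.log (e j) - d i + e j)
        = ∑ i, ∑ j, ((W i j)^2 * (d i * Real.log (d i))
            - d i * Real.log (e j) * (W i j)^2 - (W i j)^2 * d i + (W i j)^2 * e j) := by
      refine Finset.sum_congr rfl fun i _ => Finset.sum_congr rfl fun j _ => by ring
    rw [expand]
    simp only [Finset.sum_add_distrib, Finset.sum_sub_distrib]
    rw [E1 (fun i => d i * Real.log (d i)), E1 d, E2 e]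
  rw [key]
  have term_nonneg : ∀ i j, 0 ≤ (W i j)^2
      * (d i * Real.log (d i) - d i * Real.log (e j) - d i + e j) :=
    fun i j => mul_nonneg (sq_nonneg _) (scalar_klein (dpos i) (epos j))
  constructor
  · exact Finset.sum_nonneg fun i _ => Finset.sum_nonneg fun j _ => term_nonneg i j
  · intro hzero
    have hz : ∀ i j, (W i j)^2
        * (d i * Real.log (d i) - d i * Real.log (e j) - d i + e j) = 0 := by
      intro i j
      have houter := (Finset.sum_eq_zero_iff_of_nonneg
        (fun i _ => Finset.sum_nonneg fun j _ => term_nonneg i j)).mp hzero i (Finset.mem_univ i)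
      exact (Finset.sum_eq_zero_iff_of_nonneg
        (fun j _ => term_nonneg i j)).mp houter j (Finset.mem_univ j)
    have hWor : ∀ i j, W i j = 0 ∨ d i = e j := by
      intro i j
      by_contra hc
      push_neg at hc
      obtain ⟨hW0, hde⟩ := hc
      have h1 : 0 < (W i j)^2 := by positivity
      have h2 := scalar_klein_strict (dpos i) (epos j) hde
      exact (mul_pos h1 h2).ne' (hz i j)
    have hDW : diagonal d * W = W * diagonal e := by
      ext i j
      rw [diagonal_mul, mul_diagonal]
      rcases hWor i j with h | h
      · rw [h]; ring
      · rw [h]; ring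
    have hSV : S * V = V * diagonal e := by
      rw [hSd]
      calc U * diagonal d * Uᵀ * V = U * (diagonal d * (Uᵀ * V)) := by
            simp only [Matrix.mul_assoc]
      _ = U * ((Uᵀ * V) * diagonal e) := by rw [← hWdef, hDW]
      _ = (U * Uᵀ) * (V * diagonal e) := by simp only [Matrix.mul_assoc]
      _ = V * diagonal e := by rw [hU1, one_mul]
    calc S = S * (V * Vᵀ) := by rw [hV1, mul_one]
    _ = (S * V) * Vᵀ := by simp only [Matrix.mul_assoc]
    _ = V * diagonal e * Vᵀ := by rw [hSV]
    _ = T := hTd.symm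

lemma matLog_one {n : ℕ} : matLog (1 : Matrix (Fin n) (Fin n) ℝ) = 0 := by
  rw [matLog, cfc_apply_one]
  simp
lemma cfc_decomp {n : ℕ} {S : Matrix (Fin n) (Fin n) ℝ} (hH : S.IsHermitian) (f : ℝ → ℝ) :
    cfc f S = (hH.eigenvectorUnitary : Matrix (Fin n) (Fin n) ℝ)
        * diagonal (f ∘ hH.eigenvalues)
        * (hH.eigenvectorUnitary : Matrix (Fin n) (Fin n) ℝ)ᵀ := by
  rw [hH.cfc_eq, Matrix.IsHermitian.cfc]
  rw [← conjTranspose_eq_transpose_of_trivial, ← star_eq_conjTranspose]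
  simp [Function.comp]

lemma spectral_decomp' {n : ℕ} {S : Matrix (Fin n) (Fin n) ℝ} (hH : S.IsHermitian) :
    S = (hH.eigenvectorUnitary : Matrix (Fin n) (Fin n) ℝ) * diagonal hH.eigenvalues
        * (hH.eigenvectorUnitary : Matrix (Fin n) (Fin n) ℝ)ᵀ := by
  conv_lhs => rw [hH.spectral_theorem]
  rw [← conjTranspose_eq_transpose_of_trivial, ← star_eq_conjTranspose]
  simp [Function.comp]

lemma herm_package {n : ℕ} {A : Matrix (Fin n) (Fin n) ℝ} (hA : A.IsHermitian) :
    ∃ (V : Matrix (Fin n) (Fin n) ℝ) (ν : Fin n → ℝ),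
      V * Vᵀ = 1 ∧ Vᵀ * V = 1 ∧ A = V * diagonal ν * Vᵀ ∧
      ∀ f : ℝ → ℝ, cfc f A = V * diagonal (f ∘ ν) * Vᵀ :=
  ⟨_, _, (unit_mul hA).1, (unit_mul hA).2, spectral_decomp' hA, cfc_decomp hA⟩

lemma posDef_conj' {n : ℕ} {A : Matrix (Fin n) (Fin n) ℝ} (hA : A.PosDef)
    {C : Matrix (Fin n) (Fin n) ℝ} (hC : IsUnit C.det) : (Cᵀ * A * C).PosDef := by
  have hC' : IsUnit C := (isUnit_iff_isUnit_det C).2 hC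
  have hinj : Function.Injective (C.mulVec) := mulVec_injective_iff_isUnit.mpr hC'
  refine Matrix.PosDef.of_dotProduct_mulVec_pos ?_ fun x hx => ?_
  · have := isHermitian_conjTranspose_mul_mul C hA.1
    rwa [conjTranspose_eq_transpose_of_trivial] at this
  · have hy : C *ᵥ x ≠ 0 := fun h => hx (hinj (h.trans (C.mulVec_zero).symm))
    have := hA.dotProduct_mulVec_pos hy
    have hCT : Cᵀ = Cᴴ := (conjTranspose_eq_transpose_of_trivial C).symm
    rw [hCT]
    simpa only [star_mulVec, dotProduct_mulVec, vecMul_vecMul] using this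

lemma posDef_conj {n : ℕ} {A : Matrix (Fin n) (Fin n) ℝ} (hA : A.PosDef)
    {B : Matrix (Fin n) (Fin n) ℝ} (hB : IsUnit B.det) : (B * A * Bᵀ).PosDef := by
  have : IsUnit Bᵀ.det := by rwa [det_transpose]
  have h := posDef_conj' hA this
  rwa [transpose_transpose] at h

lemma exp_posDef_and_log {n : ℕ} {A : Matrix (Fin n) (Fin n) ℝ} (hA : A.IsHermitian) :
    (NormedSpace.exp A).PosDef ∧ matLog (NormedSpace.exp A) = A := by
  obtain ⟨V, ν, hV1, hV2, hAd, hcfc⟩ := herm_package hA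
  have hVu : IsUnit V := ⟨⟨V, Vᵀ, hV1, hV2⟩, rfl⟩
  have hVinv : V⁻¹ = Vᵀ := inv_eq_right_inv hV1
  have hexp : NormedSpace.exp A = V * diagonal (Real.exp ∘ ν) * Vᵀ := by
    conv_lhs => rw [hAd]
    rw [← hVinv, Matrix.exp_conj V (diagonal ν) hVu, Matrix.exp_diagonal, hVinv]
    have hpi : NormedSpace.exp ν = Real.exp ∘ ν := by
      rw [Pi.exp_def]
      funext i
      exact (congrFun Real.exp_eq_exp_ℝ (ν i)).symm
    rw [hpi]
  constructor
  · rw [hexp]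
    exact posDef_conj (Matrix.PosDef.diagonal fun i => Real.exp_pos (ν i))
      ((isUnit_iff_isUnit_det V).1 hVu)
  · have h1 : NormedSpace.exp A = cfc Real.exp A := by rw [hcfc Real.exp, hexp]
    have hsa : IsSelfAdjoint A := hA
    have hg : ContinuousOn Real.log (Real.exp '' spectrum ℝ A) := by
      refine Real.continuousOn_log.mono ?_
      rintro - ⟨x, -, rfl⟩
      simp [(Real.exp_pos x).ne']
    have hf : ContinuousOn Real.exp (spectrum ℝ A) := Real.continuous_exp.continuousOn
    rw [h1, matLog, ← cfc_comp Real.log Real.exp A hsa hg hf]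
    calc cfc (fun x => Real.log (Real.exp x)) A = cfc (fun x : ℝ => x) A := by
          simp only [Real.log_exp]
    _ = A := cfc_id' ℝ A

/-- Mirror descent with the generator `φ(X) = tr(S log S - S)`, `S = Xₙ^{-1/2} X Xₙ^{-T/2}`,
recovers the Riemannian/exponential-integrator update: the minimizer over SPD matrices `X`
of `F(X) = ⟨G, X - Xₙ⟩ + (1/Δt)·D_φ(X, Xₙ)` is
`Xₙ₊₁ = Xₙ^{1/2}·exp(-Δt·Xₙ^{T/2} G Xₙ^{1/2})·Xₙ^{T/2}`, where
`D_φ(X, Y) = φ(X) - φ(Y) - ⟨∇φ(Y), X - Y⟩`, `⟨A, B⟩ = tr(Aᵀ B)`, and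
`∇φ(Y) = Xₙ⁻¹·(Xₙ^{1/2} log(Xₙ^{-1/2} Y Xₙ^{-T/2}) Xₙ^{T/2})·Xₙ⁻¹`. -/
theorem stmt_19 {n : ℕ} (Xn R G : Matrix (Fin n) (Fin n) ℝ) (Δt : ℝ)
    (hXn : Xn.PosDef) (hXnR : Xn = R * Rᵀ) (hR : IsUnit R.det)
    (hG : G.IsSymm) (hΔt : 0 < Δt) :
    ∀ (φ : Matrix (Fin n) (Fin n) ℝ → ℝ),
      (φ = fun Y =>
        ((R⁻¹ * Y * (Rᵀ)⁻¹) * matLog (R⁻¹ * Y * (Rᵀ)⁻¹) - R⁻¹ * Y * (Rᵀ)⁻¹).trace) →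
    ∀ (Dφ : Matrix (Fin n) (Fin n) ℝ → ℝ),
      (Dφ = fun Y => φ Y - φ Xn
        - ((Xn⁻¹ * (R * matLog (R⁻¹ * Xn * (Rᵀ)⁻¹) * Rᵀ) * Xn⁻¹)ᵀ * (Y - Xn)).trace) →
    ∀ (F : Matrix (Fin n) (Fin n) ℝ → ℝ),
      (F = fun Y => (Gᵀ * (Y - Xn)).trace + (1 / Δt) * Dφ Y) →
    ∀ (Xnew : Matrix (Fin n) (Fin n) ℝ),
      (Xnew = R * NormedSpace.exp (-(Δt • (Rᵀ * G * R))) * Rᵀ) →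
    Xnew.PosDef ∧ (∀ Y : Matrix (Fin n) (Fin n) ℝ, Y.PosDef → F Xnew ≤ F Y) ∧
      (∀ Y : Matrix (Fin n) (Fin n) ℝ, Y.PosDef → F Y = F Xnew → Y = Xnew) := by
  intro φ hφ Dφ hDφ F hF Xnew hXnew
  -- basic invertibility facts
  have hRt : IsUnit Rᵀ.det := by rwa [det_transpose]
  have hRl : R⁻¹ * R = 1 := nonsing_inv_mul R hR
  have hRr : R * R⁻¹ = 1 := mul_nonsing_inv R hR
  have hRtl : (Rᵀ)⁻¹ * Rᵀ = 1 := nonsing_inv_mul _ hRt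
  have hRtr : Rᵀ * (Rᵀ)⁻¹ = 1 := mul_nonsing_inv _ hRt
  have hXnS : R⁻¹ * Xn * (Rᵀ)⁻¹ = 1 := by
    rw [hXnR]
    calc R⁻¹ * (R * Rᵀ) * (Rᵀ)⁻¹ = (R⁻¹ * R) * (Rᵀ * (Rᵀ)⁻¹) := by
          simp only [Matrix.mul_assoc]
    _ = 1 := by rw [hRl, hRtr, one_mul]
  have hrecover : ∀ Y : Matrix (Fin n) (Fin n) ℝ, R * (R⁻¹ * Y * (Rᵀ)⁻¹) * Rᵀ = Y := by
    intro Y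
    calc R * (R⁻¹ * Y * (Rᵀ)⁻¹) * Rᵀ = (R * R⁻¹) * (Y * ((Rᵀ)⁻¹ * Rᵀ)) := by
          simp only [Matrix.mul_assoc]
    _ = Y := by rw [hRr, hRtl, one_mul, mul_one]
  set M := Rᵀ * G * R with hM
  have hMsymm : M.IsHermitian := by
    show Mᴴ = M
    rw [conjTranspose_eq_transpose_of_trivial]
    rw [hM, transpose_mul, transpose_mul, transpose_transpose, hG.eq]
    simp only [Matrix.mul_assoc]
  have hMt : Mᵀ = M := by
    rw [← conjTranspose_eq_transpose_of_trivial]; exact hMsymm.eq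
  have hA0 : (-(Δt • M)).IsHermitian := by
    show _ᴴ = _
    rw [conjTranspose_eq_transpose_of_trivial, transpose_neg, transpose_smul, hMt]
  set T := NormedSpace.exp (-(Δt • M)) with hT
  obtain ⟨hT_pd, hlogT⟩ := exp_posDef_and_log hA0
  have hXnew_pd : Xnew.PosDef := by
    rw [hXnew]
    exact posDef_conj hT_pd hR
  have hSXnew : R⁻¹ * Xnew * (Rᵀ)⁻¹ = T := by
    rw [hXnew]
    calc R⁻¹ * (R * T * Rᵀ) * (Rᵀ)⁻¹ = (R⁻¹ * R) * (T * (Rᵀ * (Rᵀ)⁻¹)) := by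
          simp only [Matrix.mul_assoc]
    _ = T := by rw [hRl, hRtr, one_mul, mul_one]
  -- the gradient term vanishes
  have hgrad : ∀ Y : Matrix (Fin n) (Fin n) ℝ,
      ((Xn⁻¹ * (R * matLog (R⁻¹ * Xn * (Rᵀ)⁻¹) * Rᵀ) * Xn⁻¹)ᵀ * (Y - Xn)).trace = 0 := by
    intro Y
    rw [hXnS, matLog_one]
    simp
  have hFval : ∀ Y : Matrix (Fin n) (Fin n) ℝ,
      F Y = (Gᵀ * (Y - Xn)).trace + (1 / Δt) * (φ Y - φ Xn) := by
    intro Y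
    rw [hF]
    simp only [hDφ, hgrad Y]
    ring
  -- S-matrices are positive definite
  have hSY_pd : ∀ Y : Matrix (Fin n) (Fin n) ℝ, Y.PosDef → (R⁻¹ * Y * (Rᵀ)⁻¹).PosDef := by
    intro Y hY
    have h1 : IsUnit ((Rᵀ)⁻¹).det := isUnit_nonsing_inv_det _ hRt
    have h2 : R⁻¹ * Y * (Rᵀ)⁻¹ = ((Rᵀ)⁻¹)ᵀ * Y * (Rᵀ)⁻¹ := by
      rw [transpose_nonsing_inv, transpose_transpose]
    rw [h2]
    exact posDef_conj' hY h1
  -- trace manipulation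
  have htrace_conj : ∀ S : Matrix (Fin n) (Fin n) ℝ,
      (G * (R * S * Rᵀ)).trace = (M * S).trace := by
    intro S
    have h1 : G * (R * S * Rᵀ) = (G * R) * S * Rᵀ := by simp only [Matrix.mul_assoc]
    rw [h1, trace_mul_cycle]
    congr 1
    rw [hM]
    simp only [Matrix.mul_assoc]
  have hGY : ∀ Y : Matrix (Fin n) (Fin n) ℝ,
      (Gᵀ * Y).trace = (M * (R⁻¹ * Y * (Rᵀ)⁻¹)).trace := by
    intro Y
    rw [hG.eq]
    conv_lhs => rw [← hrecover Y]
    exact htrace_conj _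
  have hMS : ∀ S : Matrix (Fin n) (Fin n) ℝ,
      (S * matLog T).trace = -(Δt * (M * S).trace) := by
    intro S
    rw [hlogT, mul_neg, Matrix.mul_smul, trace_neg, trace_smul, smul_eq_mul,
      trace_mul_comm]
  -- value of φ
  have hφval : ∀ Y : Matrix (Fin n) (Fin n) ℝ,
      φ Y = ((R⁻¹ * Y * (Rᵀ)⁻¹) * matLog (R⁻¹ * Y * (Rᵀ)⁻¹)).trace
        - (R⁻¹ * Y * (Rᵀ)⁻¹).trace := by
    intro Y
    rw [hφ]
    simp only [trace_sub]
  -- the key difference formula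
  have key : ∀ Y : Matrix (Fin n) (Fin n) ℝ,
      Δt * (F Y - F Xnew) =
        ((R⁻¹ * Y * (Rᵀ)⁻¹) * matLog (R⁻¹ * Y * (Rᵀ)⁻¹)).trace
          - ((R⁻¹ * Y * (Rᵀ)⁻¹) * matLog T).trace
          - (R⁻¹ * Y * (Rᵀ)⁻¹).trace + T.trace := by
    intro Y
    have e3 : (Gᵀ * (Y - Xn)).trace = (Gᵀ * Y).trace - (Gᵀ * Xn).trace := by
      rw [mul_sub, trace_sub]
    have e4 : (Gᵀ * (Xnew - Xn)).trace = (Gᵀ * Xnew).trace - (Gᵀ * Xn).trace := by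
      rw [mul_sub, trace_sub]
    have e1 := hFval Y
    rw [hφval Y, e3, hGY Y] at e1
    have e2 := hFval Xnew
    rw [hφval Xnew, e4, hGY Xnew, hSXnew] at e2
    rw [e1, e2]
    have e5 := hMS (R⁻¹ * Y * (Rᵀ)⁻¹)
    have e6 := hMS T
    have hc : Δt * (1 / Δt) = 1 := by field_simp
    linear_combination e5 - e6 +
      (((R⁻¹ * Y * (Rᵀ)⁻¹) * matLog (R⁻¹ * Y * (Rᵀ)⁻¹)).trace
        - (R⁻¹ * Y * (Rᵀ)⁻¹).trace - (T * matLog T).trace + T.trace) * hc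
  refine ⟨hXnew_pd, ?_, ?_⟩
  · intro Y hY
    have hK := (klein (hSY_pd Y hY) hT_pd).1
    have h0 : 0 ≤ Δt * (F Y - F Xnew) := by rw [key Y]; exact hK
    by_contra h
    push_neg at h
    nlinarith [h0, mul_pos hΔt (sub_pos.mpr h)]
  · intro Y hY hFeq
    have hK0 : ((R⁻¹ * Y * (Rᵀ)⁻¹) * matLog (R⁻¹ * Y * (Rᵀ)⁻¹)).trace
        - ((R⁻¹ * Y * (Rᵀ)⁻¹) * matLog T).trace
        - (R⁻¹ * Y * (Rᵀ)⁻¹).trace + T.trace = 0 := by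
      rw [← key Y, hFeq]
      ring
    have hST := (klein (hSY_pd Y hY) hT_pd).2 hK0
    calc Y = R * (R⁻¹ * Y * (Rᵀ)⁻¹) * Rᵀ := (hrecover Y).symm
    _ = R * T * Rᵀ := by rw [hST]
    _ = Xnew := hXnew.symm
end
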